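/- Let p be a prime with p ∤ q−1, let b ≥ 1 be an integer, and set n = (q^{p^b}−1)/(q^{p^{b−1}}−1) (note n is coprime to q). Then {l_i : i ∈ Z_{n,r}} = {1, p^b}, N_1 = 1, and N_{p^b} = (n−1)/p^b. In particular, gcd(n, q^{p^j}−1) = 1 for every j with 0 ≤ j ≤ b−1. -/

import Mathlib

open scoped Classical

/-- The `q`-cyclotomic coset of `i` modulo `N`, with representatives taken in `{1, …, N}`. -/
noncomputable def cosetOf (q N i : ℕ) : Finset ℕ :=
  (Finset.Icc 1 N).filter (fun x => ∃ j : ℕ, x ≡ i * q ^ j [MOD N])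

/-- `Z_{n,r} = {1 + i r : 0 ≤ i ≤ n-1}`. -/
def Zset (n r : ℕ) : Finset ℕ := (Finset.range n).image (fun i => 1 + i * r)

/-- The collection of `q`-cyclotomic cosets contained in `Z_{n,r}`. -/
noncomputable def cosetsIn (q n r : ℕ) : Finset (Finset ℕ) :=
  (Zset n r).image (fun i => cosetOf q (n * r) i)

/-- `N_l`: the number of `q`-cyclotomic cosets of size `l` contained in `Z_{n,r}`. -/
noncomputable def Ncount (q n r l : ℕ) : ℕ :=
  ((cosetsIn q n r).filter (fun C => C.card = l)).card

/-- Coset leader: the smallest element of a coset. -/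
noncomputable def leader (C : Finset ℕ) : ℕ := sInf (C : Set ℕ)

/-- The sorted (increasing) list of coset leaders of the cosets of size `l` in `Z_{n,r}`. -/
noncomputable def leaderList (q n r l : ℕ) : List ℕ :=
  Finset.sort (((cosetsIn q n r).filter (fun C => C.card = l)).image leader) (· ≤ ·)

/-- `δ_i^{(l)}`: the `i`-th smallest coset leader (1-indexed). -/
noncomputable def delta (q n r l i : ℕ) : ℕ := (leaderList q n r l).getD (i - 1) 0

/-!
Since `n r ∣ q ^ p ^ b - 1`, multiplication by `q` permutes `ZMod (n r)`, the cyclotomic cosets are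
its orbits, and `l_i` is the minimal period of `i`, a divisor of `p ^ b`. With `Q = q ^ p ^ (b - 1)`
we have `n = 1 + Q + ⋯ + Q ^ (p - 1) ≡ p (mod Q - 1)`, while `Q ≡ q (mod p)` by Fermat, so `p ∤ Q - 1`
and `n` is coprime to `Q - 1`, hence to every `q ^ p ^ j - 1` with `j < b`. So a period
`p ^ j < p ^ b` of `i` forces `n ∣ i`. By the Chinese remainder theorem exactly one element of
`Z_{n,r}` is divisible by `n`, and it is fixed by `q`; counting the `n` elements of `Z_{n,r}` coset
by coset gives `n = 1 + p ^ b N_{p ^ b}`.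
-/

open Finset Function MulAction

lemma mem_orbit_zpowers_iff {G α : Type*} [Group G] [Finite G] [MulAction G α] {g : G}
    {a b : α} : b ∈ orbit (Subgroup.zpowers g) a ↔ ∃ k : ℕ, g ^ k • a = b := by
  simp only [mem_orbit_iff, Subtype.exists, ← mem_powers_iff_mem_zpowers, Submonoid.mem_powers_iff]
  constructor
  · rintro ⟨_, ⟨k, rfl⟩, rfl⟩
    exact ⟨k, rfl⟩
  · rintro ⟨k, rfl⟩
    exact ⟨_, ⟨k, rfl⟩, rfl⟩

lemma Nat.Prime.not_dvd_pow_prime_pow_sub_one {p q : ℕ} (hp : p.Prime) (hq : 1 ≤ q)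
    (hpq : ¬ p ∣ q - 1) (k : ℕ) : ¬ p ∣ q ^ p ^ k - 1 := by
  have : Fact p.Prime := ⟨hp⟩
  have hcast : ((q ^ p ^ k - 1 : ℕ) : ZMod p) = ((q - 1 : ℕ) : ZMod p) := by
    rw [Nat.cast_sub (Nat.one_le_pow _ _ hq), Nat.cast_sub hq, Nat.cast_pow, ZMod.pow_card_pow]
  rwa [← ZMod.natCast_eq_zero_iff, hcast, ZMod.natCast_eq_zero_iff]

lemma coprime_geom_sum_sub_one {Q m : ℕ} (hQ : 1 ≤ Q) (hm : m.Coprime (Q - 1)) :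
    (∑ i ∈ range m, Q ^ i).Coprime (Q - 1) := by
  have hsum : ∑ i ∈ range m, Q ^ i ≡ m [MOD Q - 1] := by
    simpa using Nat.ModEq.sum fun i (_ : i ∈ range m) => (Nat.modEq_sub hQ).pow i
  exact hsum.gcd_eq.trans hm

lemma le_geom_sum {Q : ℕ} (hQ : 1 ≤ Q) (m : ℕ) : m ≤ ∑ i ∈ range m, Q ^ i := by
  simpa using card_nsmul_le_sum (range m) (Q ^ ·) 1 fun i _ => Nat.one_le_pow _ _ hQ

lemma geom_sum_pow_pow {q p : ℕ} (hq : 2 ≤ q) (hp : 0 < p) (k : ℕ) :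
    ∑ i ∈ range p, (q ^ p ^ k) ^ i = (q ^ p ^ (k + 1) - 1) / (q ^ p ^ k - 1) := by
  rw [Nat.geomSum_eq (le_trans hq (Nat.le_self_pow (by positivity) q)), ← pow_mul, ← pow_succ]

lemma coprime_geom_sum_pow_prime_pow_sub_one {p q k j : ℕ} (hp : p.Prime) (hq : 1 ≤ q)
    (hpq : ¬ p ∣ q - 1) (hjk : j ≤ k) :
    (∑ i ∈ range p, (q ^ p ^ k) ^ i).Coprime (q ^ p ^ j - 1) :=
  (coprime_geom_sum_sub_one (Nat.one_le_pow _ _ hq) ((Nat.Prime.coprime_iff_not_dvd hp).mpr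
    (hp.not_dvd_pow_prime_pow_sub_one hq hpq k))).coprime_dvd_right
    (Nat.pow_sub_one_dvd_pow_sub_one q (pow_dvd_pow p hjk))

lemma natCast_pow_mul_eq_self_iff {N q x k : ℕ} (hq : 1 ≤ q) :
    (q : ZMod N) ^ k * x = x ↔ N ∣ x * (q ^ k - 1) := by
  rw [← ZMod.natCast_eq_zero_iff, Nat.cast_mul, Nat.cast_sub (Nat.one_le_pow _ _ hq), mul_sub,
    sub_eq_zero, Nat.cast_pow, Nat.cast_one, mul_one, mul_comm]

lemma isUnit_natCast_of_dvd_pow_sub_one {N q k : ℕ} (hq : 1 ≤ q) (hk : k ≠ 0)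
    (h : N ∣ q ^ k - 1) : IsUnit (q : ZMod N) := by
  have := (natCast_pow_mul_eq_self_iff (N := N) (x := 1) (k := k) hq).mpr (by rwa [one_mul])
  rw [Nat.cast_one, mul_one] at this
  exact IsUnit.of_pow_eq_one this hk

section CyclotomicCoset

variable {N q n r : ℕ}

lemma card_filter_Icc_natCast_mem [NeZero N] (S : Finset (ZMod N)) :
    ((Icc 1 N).filter fun x : ℕ => (x : ZMod N) ∈ S).card = S.card := by
  refine card_bij (fun x _ => (x : ZMod N)) (fun x hx => (mem_filter.mp hx).2) ?_ ?_
  · intro x hx y hy hxy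
    simp only [mem_filter, mem_Icc] at hx hy
    have h : x - 1 ≡ y - 1 [MOD N] := by
      refine Nat.ModEq.add_right_cancel' 1 ?_
      rw [Nat.sub_add_cancel hx.1.1, Nat.sub_add_cancel hy.1.1]
      exact (ZMod.natCast_eq_natCast_iff _ _ _).mp hxy
    have := h.eq_of_lt_of_lt (by omega) (by omega)
    omega
  · intro s hs
    refine ⟨(s - 1).val + 1, mem_filter.mpr ⟨mem_Icc.mpr ⟨le_add_self, (s - 1).val_lt⟩, ?_⟩, ?_⟩
    all_goals simp [hs]

lemma cosetOf_eq_filter_orbit (hq : IsUnit (q : ZMod N)) (i : ℕ) :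
    cosetOf q N i = (Icc 1 N).filter
      fun x : ℕ => (x : ZMod N) ∈ orbit (Subgroup.zpowers hq.unit) (i : ZMod N) := by
  ext x
  simp only [cosetOf, mem_filter, ← ZMod.natCast_eq_natCast_iff, mem_orbit_zpowers_iff,
    Units.smul_def, Units.val_pow_eq_pow_val, IsUnit.unit_spec, smul_eq_mul, Nat.cast_mul,
    Nat.cast_pow, mul_comm, eq_comm]

lemma card_cosetOf [NeZero N] (hq : IsUnit (q : ZMod N)) (i : ℕ) :
    (cosetOf q N i).card = minimalPeriod ((q : ZMod N) * ·) (i : ZMod N) := by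
  have hmul : ((q : ZMod N) * ·) = (hq.unit • ·) := by
    ext y
    rw [Units.smul_def, IsUnit.unit_spec, smul_eq_mul]
  have := card_filter_Icc_natCast_mem (orbit (Subgroup.zpowers hq.unit) (i : ZMod N)).toFinset
  simp only [Set.mem_toFinset, Set.toFinset_card] at this
  rw [cosetOf_eq_filter_orbit hq, this, hmul, minimalPeriod_eq_card]

lemma cosetOf_eq_cosetOf_iff (hq : IsUnit (q : ZMod N)) {x : ℕ} (hx : x ∈ Icc 1 N) (y : ℕ) :
    cosetOf q N x = cosetOf q N y ↔ x ∈ cosetOf q N y := by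
  simp only [cosetOf_eq_filter_orbit hq]
  refine ⟨fun h => h ▸ mem_filter.mpr ⟨hx, mem_orbit_self _⟩, fun h => ?_⟩
  rw [orbit_eq_iff.mpr (mem_filter.mp h).2]

lemma card_cosetOf_of_dvd [NeZero (n * r)] (hq1 : 1 ≤ q) (hq : IsUnit (q : ZMod (n * r)))
    (hrq : r ∣ q - 1) {x : ℕ} (hx : n ∣ x) : (cosetOf q (n * r) x).card = 1 := by
  rw [card_cosetOf hq, minimalPeriod_eq_one_iff_isFixedPt, IsFixedPt, ← pow_one (q : ZMod (n * r)),
    natCast_pow_mul_eq_self_iff hq1, pow_one]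
  exact mul_dvd_mul hx hrq

lemma card_cosetOf_of_not_dvd [NeZero (n * r)] {p k x : ℕ} (hp : p.Prime) (hq1 : 1 ≤ q)
    (hN : n * r ∣ q ^ p ^ (k + 1) - 1) (hcop : n.Coprime (q ^ p ^ k - 1)) (hx : ¬ n ∣ x) :
    (cosetOf q (n * r) x).card = p ^ (k + 1) := by
  have : Fact p.Prime := ⟨hp⟩
  have hperiodic : ∀ m, IsPeriodicPt ((q : ZMod (n * r)) * ·) m x ↔ n * r ∣ x * (q ^ m - 1) := by
    intro m
    rw [IsPeriodicPt, IsFixedPt, mul_left_iterate, natCast_pow_mul_eq_self_iff hq1]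
  rw [card_cosetOf (isUnit_natCast_of_dvd_pow_sub_one hq1 (pow_pos hp.pos _).ne' hN)]
  refine minimalPeriod_eq_prime_pow ?_ ((hperiodic _).mpr (dvd_mul_of_dvd_right hN x))
  rw [hperiodic]
  exact fun h => hx (hcop.dvd_of_dvd_mul_right (dvd_of_mul_right_dvd h))

end CyclotomicCoset

section Zset

variable {n r q K : ℕ}

lemma Zset_eq_filter (hr : 0 < r) : Zset n r = (Icc 1 (n * r)).filter (· ≡ 1 [MOD r]) := by
  ext y
  simp only [Zset, mem_image, mem_range, mem_filter, mem_Icc]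
  constructor
  · rintro ⟨i, hi, rfl⟩
    refine ⟨⟨le_add_right le_rfl, by nlinarith⟩, ?_⟩
    simp [Nat.ModEq, Nat.add_mul_mod_self_right]
  · rintro ⟨⟨h1, h2⟩, hy⟩
    obtain ⟨i, hi⟩ := (Nat.modEq_iff_dvd' h1).mp hy.symm
    refine ⟨i, ?_, by rw [mul_comm]; omega⟩
    by_contra! h
    have := Nat.mul_le_mul_left r h
    rw [mul_comm n] at h2
    omega

lemma card_Zset (hr : 0 < r) : (Zset n r).card = n := by
  rw [Zset, card_image_of_injective _ fun i j h => by simpa [hr.ne'] using h, card_range]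

lemma cosetOf_subset_Zset {x : ℕ} (hr : 0 < r) (hqr : q ≡ 1 [MOD r]) (hx : x ∈ Zset n r) :
    cosetOf q (n * r) x ⊆ Zset n r := by
  rw [Zset_eq_filter hr] at hx ⊢
  intro y hy
  obtain ⟨hyI, j, hj⟩ := mem_filter.mp hy
  refine mem_filter.mpr ⟨hyI, (hj.of_mul_left n).trans ?_⟩
  simpa using (mem_filter.mp hx).2.mul (hqr.pow j)

lemma card_filter_dvd_Zset (hn : 0 < n) (hr : 0 < r) (hnr : n.Coprime r) :
    ((Zset n r).filter (n ∣ ·)).card = 1 := by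
  have : NeZero (n * r) := ⟨by positivity⟩
  let c := (ZMod.chineseRemainder hnr).symm (0, 1)
  suffices h : (Zset n r).filter (n ∣ ·) =
      (Icc 1 (n * r)).filter fun y : ℕ => (y : ZMod (n * r)) ∈ ({c} : Finset _) by
    rw [h, card_filter_Icc_natCast_mem, card_singleton]
  rw [Zset_eq_filter hr, filter_filter]
  refine filter_congr fun y _ => ?_
  rw [mem_singleton, ← (ZMod.chineseRemainder hnr).injective.eq_iff, RingEquiv.apply_symm_apply,
    map_natCast, Prod.ext_iff]
  simp only [Prod.fst_natCast, Prod.snd_natCast, ZMod.natCast_eq_zero_iff,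
    ← Nat.cast_one (R := ZMod r), ZMod.natCast_eq_natCast_iff]
  exact and_comm

lemma sum_card_cosetsIn (hr : 0 < r) (hqr : q ≡ 1 [MOD r])
    (hq : IsUnit (q : ZMod (n * r))) : ∑ C ∈ cosetsIn q n r, C.card = n := by
  have hIcc : ∀ x ∈ Zset n r, x ∈ Icc 1 (n * r) := fun x hx => by
    rw [Zset_eq_filter hr] at hx
    exact (mem_filter.mp hx).1
  have hfiber : ∀ y ∈ Zset n r,
      (Zset n r).filter (cosetOf q (n * r) · = cosetOf q (n * r) y) = cosetOf q (n * r) y := by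
    intro y hy
    ext x
    rw [mem_filter]
    refine ⟨fun ⟨hx, h⟩ => (cosetOf_eq_cosetOf_iff hq (hIcc x hx) y).mp h, fun h => ?_⟩
    have hx := cosetOf_subset_Zset hr hqr hy h
    exact ⟨hx, (cosetOf_eq_cosetOf_iff hq (hIcc x hx) y).mpr h⟩
  calc ∑ C ∈ cosetsIn q n r, C.card
      = ∑ C ∈ cosetsIn q n r, ((Zset n r).filter (cosetOf q (n * r) · = C)).card := by
        refine sum_congr rfl fun C hC => ?_
        obtain ⟨y, hy, rfl⟩ := mem_image.mp hC
        rw [hfiber y hy]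
    _ = n := by rw [cosetsIn, ← card_eq_sum_card_image, card_Zset hr]

lemma sum_card_cosetsIn_eq_sum_Ncount :
    ∑ C ∈ cosetsIn q n r, C.card =
      ∑ l ∈ (Zset n r).image (fun i => (cosetOf q (n * r) i).card), Ncount q n r l * l := by
  rw [sum_comp (s := cosetsIn q n r) (fun l : ℕ => l) card, cosetsIn, image_image]
  rfl

lemma image_card_cosetOf_eq_pair (hn : 1 < n) (hr : 0 < r) (hnr : n.Coprime r)
    (hdvd : ∀ x, n ∣ x → (cosetOf q (n * r) x).card = 1)
    (hndvd : ∀ x, ¬ n ∣ x → (cosetOf q (n * r) x).card = K) :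
    (Zset n r).image (fun i => (cosetOf q (n * r) i).card) = {1, K} := by
  obtain ⟨x₀, hx₀⟩ := card_eq_one.mp (card_filter_dvd_Zset (by omega) hr hnr)
  obtain ⟨hx₀Z, hnx₀⟩ := mem_filter.mp (hx₀ ▸ mem_singleton_self x₀)
  have h1Z : 1 ∈ Zset n r := mem_image.mpr ⟨0, mem_range.mpr (by omega), by simp⟩
  ext l
  simp only [mem_image, mem_insert, mem_singleton]
  constructor
  · rintro ⟨x, -, rfl⟩
    by_cases hx : n ∣ x
    exacts [Or.inl (hdvd x hx), Or.inr (hndvd x hx)]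
  · rintro (rfl | rfl)
    exacts [⟨x₀, hx₀Z, hdvd x₀ hnx₀⟩, ⟨1, h1Z, hndvd 1 (Nat.not_dvd_of_pos_of_lt one_pos hn)⟩]

lemma Ncount_one_eq_one (hK : K ≠ 1) (hn : 0 < n) (hr : 0 < r) (hnr : n.Coprime r)
    (hdvd : ∀ x, n ∣ x → (cosetOf q (n * r) x).card = 1)
    (hndvd : ∀ x, ¬ n ∣ x → (cosetOf q (n * r) x).card = K) :
    Ncount q n r 1 = 1 := by
  have hfilter : (Zset n r).filter (fun x => (cosetOf q (n * r) x).card = 1) =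
      (Zset n r).filter (n ∣ ·) := by
    refine filter_congr fun x _ => ⟨fun h => ?_, hdvd x⟩
    by_contra hx
    exact hK ((hndvd x hx).symm.trans h)
  obtain ⟨x₀, hx₀⟩ := card_eq_one.mp (card_filter_dvd_Zset hn hr hnr)
  rw [Ncount, cosetsIn, filter_image, hfilter, hx₀, image_singleton, card_singleton]

end Zset

theorem stmt16_general (q r p b n : ℕ) (hrdvd : r ∣ q - 1)
    (hp : p.Prime) (hpq : ¬ p ∣ q - 1) (hb : 1 ≤ b)
    (hn : n = (q ^ p ^ b - 1) / (q ^ p ^ (b - 1) - 1)) :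
    (Zset n r).image (fun i => (cosetOf q (n * r) i).card) = {1, p ^ b} ∧
    Ncount q n r 1 = 1 ∧
    Ncount q n r (p ^ b) = (n - 1) / p ^ b ∧
    (∀ j < b, Nat.gcd n (q ^ p ^ j - 1) = 1) := by
  obtain ⟨k, rfl⟩ : ∃ k, b = k + 1 := ⟨b - 1, by omega⟩
  have hq : 2 ≤ q := by
    by_contra! h
    exact hpq (by simp [Nat.sub_eq_zero_of_le (Nat.le_of_lt_succ h)])
  have hr : 0 < r := Nat.pos_of_dvd_of_pos hrdvd (by omega)
  have hqr : q ≡ 1 [MOD r] := ((Nat.modEq_iff_dvd' (by omega)).mpr hrdvd).symm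
  rw [Nat.add_sub_cancel, ← geom_sum_pow_pow hq hp.pos] at hn
  have hcop : ∀ j < k + 1, n.Coprime (q ^ p ^ j - 1) := fun j hj =>
    hn ▸ coprime_geom_sum_pow_prime_pow_sub_one hp (by omega) hpq (by omega)
  have hn2 : 2 ≤ n := hp.two_le.trans (hn ▸ le_geom_sum (Nat.one_le_pow _ _ (by omega)) p)
  have hnr : n.Coprime r :=
    (by simpa using hcop 0 k.succ_pos : n.Coprime (q - 1)).coprime_dvd_right hrdvd
  have hN : n * r ∣ q ^ p ^ (k + 1) - 1 := by
    refine hnr.mul_dvd_of_dvd_of_dvd ?_ (hrdvd.trans (Nat.sub_one_dvd_pow_sub_one q _))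
    rw [hn, geom_sum_pow_pow hq hp.pos]
    exact Nat.div_dvd_of_dvd (Nat.pow_sub_one_dvd_pow_sub_one q (pow_dvd_pow p k.le_succ))
  have : NeZero (n * r) := ⟨Nat.mul_ne_zero (by omega) hr.ne'⟩
  have hunit := isUnit_natCast_of_dvd_pow_sub_one (by omega) (pow_pos hp.pos _).ne' hN
  have hdvd := fun x => card_cosetOf_of_dvd (x := x) (by omega) hunit hrdvd
  have hndvd := fun x => card_cosetOf_of_not_dvd (x := x) hp (by omega) hN (hcop k k.lt_succ_self)
  have hK : 1 < p ^ (k + 1) := Nat.one_lt_pow k.succ_ne_zero hp.one_lt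
  have himage := image_card_cosetOf_eq_pair (by omega) hr hnr hdvd hndvd
  have hN1 := Ncount_one_eq_one hK.ne' (by omega) hr hnr hdvd hndvd
  refine ⟨himage, hN1, ?_, hcop⟩
  have hcount := sum_card_cosetsIn hr hqr hunit
  rw [sum_card_cosetsIn_eq_sum_Ncount, himage, sum_pair hK.ne, hN1] at hcount
  exact (Nat.div_eq_of_eq_mul_left (by omega) (by omega)).symm

theorem stmt16 (q r p b n : ℕ) (hq : IsPrimePow q) (hr : 0 < r) (hrdvd : r ∣ q - 1)
    (hp : p.Prime) (hpq : ¬ p ∣ q - 1) (hb : 1 ≤ b)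
    (hn : n = (q ^ p ^ b - 1) / (q ^ p ^ (b - 1) - 1)) :
    (Zset n r).image (fun i => (cosetOf q (n * r) i).card) = {1, p ^ b} ∧
    Ncount q n r 1 = 1 ∧
    Ncount q n r (p ^ b) = (n - 1) / p ^ b ∧
    (∀ j < b, Nat.gcd n (q ^ p ^ j - 1) = 1) :=
  stmt16_general q r p b n hrdvd hp hpq hb hn
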